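/- Let p be a monic polynomial of degree 3 with real coefficients. If Δ³φ(0) = p(Δ_c)φ(0) holds simultaneously for φ = |z₁|⁴ and φ = |z₁|²|z₂|², where Δ is the Kähler Laplacian of the product hyperbolic metric on the bidisc and Δ_c the Euclidean Laplacian on ℂ², then we obtain a contradiction: there is no such polynomial p. -/

import Mathlib

open Complex

/-- Wirtinger derivative ∂/∂z_i for functions on ℂⁿ. -/
noncomputable def dz {n : ℕ} (i : Fin n) (f : (Fin n → ℂ) → ℂ) : (Fin n → ℂ) → ℂ :=
  fun p => (1 / 2) * (fderiv ℝ f p (Pi.single i 1) -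
    Complex.I * fderiv ℝ f p (Pi.single i Complex.I))

/-- Wirtinger derivative ∂/∂z̄_i for functions on ℂⁿ. -/
noncomputable def dzbar {n : ℕ} (i : Fin n) (f : (Fin n → ℂ) → ℂ) : (Fin n → ℂ) → ℂ :=
  fun p => (1 / 2) * (fderiv ℝ f p (Pi.single i 1) +
    Complex.I * fderiv ℝ f p (Pi.single i Complex.I))

/-- Kähler Laplacian of the product hyperbolic metric on the bidisc. -/
noncomputable def DeltaBi (f : (Fin 2 → ℂ) → ℂ) : (Fin 2 → ℂ) → ℂ :=
  fun p => (1 - (Complex.normSq (p 0) : ℂ)) ^ 2 * dz 0 (dzbar 0 f) p +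
           (1 - (Complex.normSq (p 1) : ℂ)) ^ 2 * dz 1 (dzbar 1 f) p

/-- Complex Euclidean Laplacian Δ_c on ℂ². -/
noncomputable def Deltac (f : (Fin 2 → ℂ) → ℂ) : (Fin 2 → ℂ) → ℂ :=
  fun p => ∑ i, dz i (dzbar i f) p

/-! ### One-variable Wirtinger calculus -/

local notation "cj" => starRingEnd ℂ

noncomputable def Lw (a b : ℂ) : ℂ →L[ℝ] ℂ :=
  a • (ContinuousLinearMap.id ℝ ℂ) + b • (Complex.conjCLE.toContinuousLinearMap)

@[simp] lemma Lw_apply (a b w : ℂ) : Lw a b w = a * w + b * cj w := by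
  simp [Lw, Complex.conjCLE]; try ring

def Wd (g g1 g2 : ℂ → ℂ) : Prop := ∀ z, HasFDerivAt g (Lw (g1 z) (g2 z)) z

lemma Wd_const (c : ℂ) : Wd (fun _ => c) (fun _ => 0) (fun _ => 0) := by
  intro z
  have h : Lw (0:ℂ) (0:ℂ) = 0 := by ext w; simp
  rw [h]; exact hasFDerivAt_const c z

lemma Wd_id : Wd (fun z => z) (fun _ => 1) (fun _ => 0) := by
  intro z
  have h : Lw (1:ℂ) (0:ℂ) = ContinuousLinearMap.id ℝ ℂ := by ext w; simp
  rw [h]; exact hasFDerivAt_id z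

lemma Wd_conj : Wd (fun z => cj z) (fun _ => 0) (fun _ => 1) := by
  intro z
  have h : Lw (0:ℂ) (1:ℂ) = Complex.conjCLE.toContinuousLinearMap := by
    ext w; simp [Complex.conjCLE]
  rw [h]; exact Complex.conjCLE.toContinuousLinearMap.hasFDerivAt

lemma Wd.mul {f f1 f2 g g1 g2 : ℂ → ℂ} (hf : Wd f f1 f2) (hg : Wd g g1 g2) :
    Wd (fun z => f z * g z) (fun z => f1 z * g z + f z * g1 z)
      (fun z => f2 z * g z + f z * g2 z) := by
  intro z
  have h : Lw (f1 z * g z + f z * g1 z) (f2 z * g z + f z * g2 z)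
      = f z • Lw (g1 z) (g2 z) + g z • Lw (f1 z) (f2 z) := by
    ext w; simp; ring
  rw [h]; exact (hf z).mul (hg z)

lemma Wd.add {f f1 f2 g g1 g2 : ℂ → ℂ} (hf : Wd f f1 f2) (hg : Wd g g1 g2) :
    Wd (fun z => f z + g z) (fun z => f1 z + g1 z) (fun z => f2 z + g2 z) := by
  intro z
  have h : Lw (f1 z + g1 z) (f2 z + g2 z) = Lw (f1 z) (f2 z) + Lw (g1 z) (g2 z) := by
    ext w; simp; ring
  rw [h]; exact (hf z).add (hg z)

lemma Wd.congr {f f1 f2 g g1 g2 : ℂ → ℂ} (hf : Wd f f1 f2)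
    (h : ∀ z, f z = g z) (h1 : ∀ z, f1 z = g1 z) (h2 : ∀ z, f2 z = g2 z) :
    Wd g g1 g2 := by
  intro z
  have hg : g = f := funext fun z => (h z).symm
  rw [hg, ← h1 z, ← h2 z]; exact hf z

lemma Wd_pow (a : ℕ) : Wd (fun z => z ^ a) (fun z => a * z ^ (a - 1)) (fun _ => 0) := by
  induction a with
  | zero => exact (Wd_const 1).congr (by simp) (by simp) (by simp)
  | succ n ih =>
    refine (Wd_id.mul ih).congr (fun z => by ring) (fun z => ?_) (fun z => by ring)
    cases n with
    | zero => simp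
    | succ m => push_cast [Nat.succ_sub_one]; ring_nf

lemma Wd_cpow (b : ℕ) : Wd (fun z => cj z ^ b) (fun _ => 0) (fun z => b * cj z ^ (b - 1)) := by
  induction b with
  | zero => exact (Wd_const 1).congr (by simp) (by simp) (by simp)
  | succ n ih =>
    refine (Wd_conj.mul ih).congr (fun z => by ring) (fun z => by ring) (fun z => ?_)
    cases n with
    | zero => simp
    | succ m => push_cast [Nat.succ_sub_one]; ring_nf

/-- a term: coefficient, power of z, power of conj z -/
abbrev Tm := ℂ × ℕ × ℕ

noncomputable def tval (t : Tm) (z : ℂ) : ℂ := t.1 * z ^ t.2.1 * cj z ^ t.2.2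

noncomputable def ev (l : List Tm) (z : ℂ) : ℂ := (l.map fun t => tval t z).sum

def dZ (l : List Tm) : List Tm := l.map fun t => (t.1 * t.2.1, t.2.1 - 1, t.2.2)
def dZb (l : List Tm) : List Tm := l.map fun t => (t.1 * t.2.2, t.2.1, t.2.2 - 1)

lemma Wd_tval (t : Tm) : Wd (tval t) (tval (t.1 * t.2.1, t.2.1 - 1, t.2.2))
    (tval (t.1 * t.2.2, t.2.1, t.2.2 - 1)) := by
  obtain ⟨c, a, b⟩ := t
  have h := ((Wd_const c).mul (Wd_pow a)).mul (Wd_cpow b)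
  exact h.congr (fun z => by simp only [tval]; try ring) (fun z => by simp only [tval]; try ring)
    (fun z => by simp only [tval]; try ring)

lemma Wd_ev (l : List Tm) : Wd (ev l) (ev (dZ l)) (ev (dZb l)) := by
  induction l with
  | nil => exact (Wd_const 0).congr (by simp [ev]) (by simp [ev, dZ]) (by simp [ev, dZb])
  | cons t l ih =>
    exact ((Wd_tval t).add ih).congr (fun z => by simp [ev]) (fun z => by simp [ev, dZ])
      (fun z => by simp [ev, dZb])

/-! ### Two-variable layer -/

noncomputable def EV2 (L : List (List Tm × List Tm)) : (Fin 2 → ℂ) → ℂ :=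
  fun p => (L.map fun gh => ev gh.1 (p 0) * ev gh.2 (p 1)).sum

noncomputable def Dpp (l m : List Tm) (p : Fin 2 → ℂ) : (Fin 2 → ℂ) →L[ℝ] ℂ :=
  ev l (p 0) • ((Lw (ev (dZ m) (p 1)) (ev (dZb m) (p 1))).comp (ContinuousLinearMap.proj 1)) +
  ev m (p 1) • ((Lw (ev (dZ l) (p 0)) (ev (dZb l) (p 0))).comp (ContinuousLinearMap.proj 0))

lemma hasFDerivAt_pp (l m : List Tm) (p : Fin 2 → ℂ) :
    HasFDerivAt (fun q => ev l (q 0) * ev m (q 1)) (Dpp l m p) p := by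
  have h0 : HasFDerivAt (fun q : Fin 2 → ℂ => ev l (q 0))
      ((Lw (ev (dZ l) (p 0)) (ev (dZb l) (p 0))).comp (ContinuousLinearMap.proj 0)) p := by
    have := (Wd_ev l (p 0)).comp p (ContinuousLinearMap.proj (R := ℝ) (φ := fun _ : Fin 2 => ℂ) 0).hasFDerivAt
    exact this
  have h1 : HasFDerivAt (fun q : Fin 2 → ℂ => ev m (q 1))
      ((Lw (ev (dZ m) (p 1)) (ev (dZb m) (p 1))).comp (ContinuousLinearMap.proj 1)) p := by
    have := (Wd_ev m (p 1)).comp p (ContinuousLinearMap.proj (R := ℝ) (φ := fun _ : Fin 2 => ℂ) 1).hasFDerivAt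
    exact this
  exact h0.mul h1

lemma hasFDerivAt_EV2 (L : List (List Tm × List Tm)) (p : Fin 2 → ℂ) :
    HasFDerivAt (EV2 L) ((L.map fun gh => Dpp gh.1 gh.2 p).sum) p := by
  induction L with
  | nil =>
    have he : EV2 [] = fun _ => (0:ℂ) := by funext q; simp [EV2]
    rw [he]; simpa using hasFDerivAt_const (0:ℂ) p
  | cons gh L ih =>
    have h := (hasFDerivAt_pp gh.1 gh.2 p).add ih
    have he : EV2 (gh :: L) = fun q => ev gh.1 (q 0) * ev gh.2 (q 1) + EV2 L q := by
      funext q; simp [EV2]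
    rw [he]; simp only [List.map_cons, List.sum_cons]; exact h

lemma ev2_apply (L : List (List Tm × List Tm)) (p : Fin 2 → ℂ) (w : Fin 2 → ℂ) :
    fderiv ℝ (EV2 L) p w = (L.map fun gh => Dpp gh.1 gh.2 p w).sum := by
  rw [(hasFDerivAt_EV2 L p).fderiv]
  induction L with
  | nil => simp
  | cons gh L ih => simp [ih]

lemma dz0_EV2 (L : List (List Tm × List Tm)) :
    dz 0 (EV2 L) = EV2 (L.map fun gh => (dZ gh.1, gh.2)) := by
  funext p
  simp only [dz, ev2_apply]
  induction L with
  | nil => simp [EV2]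
  | cons gh L ih =>
    simp only [List.map_cons, List.sum_cons, EV2] at *
    rw [show ∀ a b c d : ℂ, (1/2) * (a + b - Complex.I * (c + d))
        = (1/2) * (a - Complex.I * c) + (1/2)*(b - Complex.I * d) from by intros; ring]
    rw [ih]
    congr 1
    simp [Dpp, Pi.single_eq_same, Pi.single_eq_of_ne (show (1:Fin 2) ≠ 0 by decide),
      Complex.conj_I]
    linear_combination (ev gh.2 (p 1) * ev (dZb gh.1) (p 0)
      - ev gh.2 (p 1) * ev (dZ gh.1) (p 0)) / 2 * Complex.I_mul_I

lemma dzbar0_EV2 (L : List (List Tm × List Tm)) :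
    dzbar 0 (EV2 L) = EV2 (L.map fun gh => (dZb gh.1, gh.2)) := by
  funext p
  simp only [dzbar, ev2_apply]
  induction L with
  | nil => simp [EV2]
  | cons gh L ih =>
    simp only [List.map_cons, List.sum_cons, EV2] at *
    rw [show ∀ a b c d : ℂ, (1/2) * (a + b + Complex.I * (c + d))
        = (1/2) * (a + Complex.I * c) + (1/2)*(b + Complex.I * d) from by intros; ring]
    rw [ih]
    congr 1
    simp [Dpp, Pi.single_eq_same, Pi.single_eq_of_ne (show (1:Fin 2) ≠ 0 by decide),
      Complex.conj_I]
    linear_combination (ev gh.2 (p 1) * ev (dZ gh.1) (p 0)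
      - ev gh.2 (p 1) * ev (dZb gh.1) (p 0)) / 2 * Complex.I_mul_I

lemma dz1_EV2 (L : List (List Tm × List Tm)) :
    dz 1 (EV2 L) = EV2 (L.map fun gh => (gh.1, dZ gh.2)) := by
  funext p
  simp only [dz, ev2_apply]
  induction L with
  | nil => simp [EV2]
  | cons gh L ih =>
    simp only [List.map_cons, List.sum_cons, EV2] at *
    rw [show ∀ a b c d : ℂ, (1/2) * (a + b - Complex.I * (c + d))
        = (1/2) * (a - Complex.I * c) + (1/2)*(b - Complex.I * d) from by intros; ring]
    rw [ih]
    congr 1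
    simp [Dpp, Pi.single_eq_same, Pi.single_eq_of_ne (show (0:Fin 2) ≠ 1 by decide),
      Complex.conj_I]
    linear_combination (ev gh.1 (p 0) * ev (dZb gh.2) (p 1)
      - ev gh.1 (p 0) * ev (dZ gh.2) (p 1)) / 2 * Complex.I_mul_I

lemma dzbar1_EV2 (L : List (List Tm × List Tm)) :
    dzbar 1 (EV2 L) = EV2 (L.map fun gh => (gh.1, dZb gh.2)) := by
  funext p
  simp only [dzbar, ev2_apply]
  induction L with
  | nil => simp [EV2]
  | cons gh L ih =>
    simp only [List.map_cons, List.sum_cons, EV2] at *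
    rw [show ∀ a b c d : ℂ, (1/2) * (a + b + Complex.I * (c + d))
        = (1/2) * (a + Complex.I * c) + (1/2)*(b + Complex.I * d) from by intros; ring]
    rw [ih]
    congr 1
    simp [Dpp, Pi.single_eq_same, Pi.single_eq_of_ne (show (0:Fin 2) ≠ 1 by decide),
      Complex.conj_I]
    linear_combination (ev gh.1 (p 0) * ev (dZ gh.2) (p 1)
      - ev gh.1 (p 0) * ev (dZb gh.2) (p 1)) / 2 * Complex.I_mul_I

/-! ### The explicit computations -/

/-- |z|² as a term list -/
def ls : List Tm := [((1:ℂ),1,1)]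
def lone : List Tm := [((1:ℂ),0,0)]
def lq : List Tm := [((1:ℂ),0,0),((-2:ℂ),1,1),((1:ℂ),2,2)]
def lA : List Tm := [((-2:ℂ),0,0),((8:ℂ),1,1),((-10:ℂ),2,2),((4:ℂ),3,3)]
def lψ : List Tm := [((1:ℂ),2,2)]
def lψ1 : List Tm := [((4:ℂ),1,1),((-8:ℂ),2,2),((4:ℂ),3,3)]
def lψ2 : List Tm := [((4:ℂ),0,0),((-40:ℂ),1,1),((104:ℂ),2,2),((-104:ℂ),3,3),((36:ℂ),4,4)]

def Lψ0 : List (List Tm × List Tm) := [(lψ, lone)]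
def Lψ1 : List (List Tm × List Tm) := [(lψ1, lone)]
def Lψ2 : List (List Tm × List Tm) := [(lψ2, lone)]
def Lφ0 : List (List Tm × List Tm) := [(ls, ls)]
def Lφ1 : List (List Tm × List Tm) := [(lq, ls), (ls, lq)]
def Lφ2 : List (List Tm × List Tm) := [(lA, ls), (lq, lq), (lq, lq), (ls, lA)]
def Cψ1 : List (List Tm × List Tm) := [([((4:ℂ),1,1)], lone)]
def Cψ2 : List (List Tm × List Tm) := [([((4:ℂ),0,0)], lone)]
def Cφ1 : List (List Tm × List Tm) := [(lone, ls), (ls, lone)]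
def Cφ2 : List (List Tm × List Tm) := [(lone, lone), (lone, lone)]

lemma stepψ1 : DeltaBi (EV2 Lψ0) = EV2 Lψ1 := by
  funext p
  simp only [DeltaBi, dzbar0_EV2, dz0_EV2, dzbar1_EV2, dz1_EV2]
  simp only [Lψ0, Lψ1, lψ, lψ1, lone, EV2, ev, tval, dZ, dZb, List.map_cons, List.map_nil,
    List.sum_cons, List.sum_nil, ← Complex.mul_conj]
  push_cast
  ring

lemma stepψ2 : DeltaBi (EV2 Lψ1) = EV2 Lψ2 := by
  funext p
  simp only [DeltaBi, dzbar0_EV2, dz0_EV2, dzbar1_EV2, dz1_EV2]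
  simp only [Lψ1, Lψ2, lψ1, lψ2, lone, EV2, ev, tval, dZ, dZb, List.map_cons, List.map_nil,
    List.sum_cons, List.sum_nil, ← Complex.mul_conj]
  push_cast
  ring

lemma vψ : DeltaBi (EV2 Lψ2) 0 = -40 := by
  simp only [DeltaBi, dzbar0_EV2, dz0_EV2, dzbar1_EV2, dz1_EV2]
  norm_num [Lψ2, lψ2, lone, EV2, ev, tval, dZ, dZb]

lemma stepφ1 : DeltaBi (EV2 Lφ0) = EV2 Lφ1 := by
  funext p
  simp only [DeltaBi, dzbar0_EV2, dz0_EV2, dzbar1_EV2, dz1_EV2]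
  simp only [Lφ0, Lφ1, ls, lq, EV2, ev, tval, dZ, dZb, List.map_cons, List.map_nil,
    List.sum_cons, List.sum_nil, ← Complex.mul_conj]
  push_cast
  ring

lemma stepφ2 : DeltaBi (EV2 Lφ1) = EV2 Lφ2 := by
  funext p
  simp only [DeltaBi, dzbar0_EV2, dz0_EV2, dzbar1_EV2, dz1_EV2]
  simp only [Lφ1, Lφ2, ls, lq, lA, EV2, ev, tval, dZ, dZb, List.map_cons, List.map_nil,
    List.sum_cons, List.sum_nil, ← Complex.mul_conj]
  push_cast
  ring

lemma vφ : DeltaBi (EV2 Lφ2) 0 = -12 := by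
  simp only [DeltaBi, dzbar0_EV2, dz0_EV2, dzbar1_EV2, dz1_EV2]
  norm_num [Lφ2, ls, lq, lA, EV2, ev, tval, dZ, dZb]

lemma cstepψ1 : Deltac (EV2 Lψ0) = EV2 Cψ1 := by
  funext p
  simp only [Deltac, Fin.sum_univ_two, dzbar0_EV2, dz0_EV2, dzbar1_EV2, dz1_EV2]
  simp only [Lψ0, Cψ1, lψ, lone, EV2, ev, tval, dZ, dZb, List.map_cons, List.map_nil,
    List.sum_cons, List.sum_nil]
  push_cast
  ring

lemma cstepψ2 : Deltac (EV2 Cψ1) = EV2 Cψ2 := by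
  funext p
  simp only [Deltac, Fin.sum_univ_two, dzbar0_EV2, dz0_EV2, dzbar1_EV2, dz1_EV2]
  simp only [Cψ1, Cψ2, lone, EV2, ev, tval, dZ, dZb, List.map_cons, List.map_nil,
    List.sum_cons, List.sum_nil]
  push_cast
  ring

lemma cvψ3 : Deltac (EV2 Cψ2) 0 = 0 := by
  simp only [Deltac, Fin.sum_univ_two, dzbar0_EV2, dz0_EV2, dzbar1_EV2, dz1_EV2]
  norm_num [Cψ2, lone, EV2, ev, tval, dZ, dZb]

lemma cvψ1 : Deltac (EV2 Lψ0) 0 = 0 := by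
  rw [cstepψ1]; norm_num [Cψ1, lone, EV2, ev, tval]

lemma cvψ2 : Deltac (EV2 Cψ1) 0 = 4 := by
  rw [cstepψ2]; norm_num [Cψ2, lone, EV2, ev, tval]

lemma cstepφ1 : Deltac (EV2 Lφ0) = EV2 Cφ1 := by
  funext p
  simp only [Deltac, Fin.sum_univ_two, dzbar0_EV2, dz0_EV2, dzbar1_EV2, dz1_EV2]
  simp only [Lφ0, Cφ1, ls, lone, EV2, ev, tval, dZ, dZb, List.map_cons, List.map_nil,
    List.sum_cons, List.sum_nil]
  push_cast
  ring

lemma cstepφ2 : Deltac (EV2 Cφ1) = EV2 Cφ2 := by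
  funext p
  simp only [Deltac, Fin.sum_univ_two, dzbar0_EV2, dz0_EV2, dzbar1_EV2, dz1_EV2]
  simp only [Cφ1, Cφ2, ls, lone, EV2, ev, tval, dZ, dZb, List.map_cons, List.map_nil,
    List.sum_cons, List.sum_nil]
  push_cast
  ring

lemma cvφ3 : Deltac (EV2 Cφ2) 0 = 0 := by
  simp only [Deltac, Fin.sum_univ_two, dzbar0_EV2, dz0_EV2, dzbar1_EV2, dz1_EV2]
  norm_num [Cφ2, lone, EV2, ev, tval, dZ, dZb]

lemma cvφ1 : Deltac (EV2 Lφ0) 0 = 0 := by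
  rw [cstepφ1]; norm_num [Cφ1, ls, lone, EV2, ev, tval]

lemma cvφ2 : Deltac (EV2 Cφ1) 0 = 2 := by
  rw [cstepφ2]; norm_num [Cφ2, lone, EV2, ev, tval]

lemma v0ψ : EV2 Lψ0 0 = 0 := by norm_num [Lψ0, lψ, lone, EV2, ev, tval]
lemma v0φ : EV2 Lφ0 0 = 0 := by norm_num [Lφ0, ls, EV2, ev, tval]

theorem stmt8 :
    let φ : (Fin 2 → ℂ) → ℂ :=
      fun p => ((Complex.normSq (p 0) * Complex.normSq (p 1) : ℝ) : ℂ)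
    let ψ : (Fin 2 → ℂ) → ℂ :=
      fun p => (((Complex.normSq (p 0)) ^ 2 : ℝ) : ℂ)
    ¬ ∃ p : Polynomial ℝ, p.Monic ∧ p.natDegree = 3 ∧
      ((DeltaBi^[3]) ψ 0 = ∑ i ∈ Finset.range 4, (p.coeff i : ℂ) * (Deltac^[i]) ψ 0) ∧
      ((DeltaBi^[3]) φ 0 = ∑ i ∈ Finset.range 4, (p.coeff i : ℂ) * (Deltac^[i]) φ 0) := by
  intro φ ψ
  rintro ⟨p, hm, hd, hψ, hφ⟩
  have hψE : ψ = EV2 Lψ0 := by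
    funext q
    show (((Complex.normSq (q 0)) ^ 2 : ℝ) : ℂ) = _
    push_cast
    rw [← Complex.mul_conj]
    simp [Lψ0, lψ, lone, EV2, ev, tval]
    try ring
  have hφE : φ = EV2 Lφ0 := by
    funext q
    show ((Complex.normSq (q 0) * Complex.normSq (q 1) : ℝ) : ℂ) = _
    push_cast
    rw [← Complex.mul_conj, ← Complex.mul_conj]
    simp [Lφ0, ls, EV2, ev, tval]
    try ring
  rw [hψE] at hψ
  rw [hφE] at hφ
  have hc3 : p.coeff 3 = 1 := by
    have := hm.coeff_natDegree; rwa [hd] at this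
  have eψL : (DeltaBi^[3]) (EV2 Lψ0) 0 = -40 := by
    show DeltaBi (DeltaBi (DeltaBi (EV2 Lψ0))) 0 = -40
    rw [stepψ1, stepψ2]; exact vψ
  have eφL : (DeltaBi^[3]) (EV2 Lφ0) 0 = -12 := by
    show DeltaBi (DeltaBi (DeltaBi (EV2 Lφ0))) 0 = -12
    rw [stepφ1, stepφ2]; exact vφ
  have eψ2 : (Deltac^[2]) (EV2 Lψ0) 0 = 4 := by
    show Deltac (Deltac (EV2 Lψ0)) 0 = 4
    rw [cstepψ1]; exact cvψ2
  have eψ3 : (Deltac^[3]) (EV2 Lψ0) 0 = 0 := by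
    show Deltac (Deltac (Deltac (EV2 Lψ0))) 0 = 0
    rw [cstepψ1, cstepψ2]; exact cvψ3
  have eφ2 : (Deltac^[2]) (EV2 Lφ0) 0 = 2 := by
    show Deltac (Deltac (EV2 Lφ0)) 0 = 2
    rw [cstepφ1]; exact cvφ2
  have eφ3 : (Deltac^[3]) (EV2 Lφ0) 0 = 0 := by
    show Deltac (Deltac (Deltac (EV2 Lφ0))) 0 = 0
    rw [cstepφ1, cstepφ2]; exact cvφ3
  rw [Finset.sum_range_succ, Finset.sum_range_succ, Finset.sum_range_succ,
    Finset.sum_range_one] at hψ hφ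
  rw [eψL, eψ2, eψ3, hc3] at hψ
  rw [eφL, eφ2, eφ3, hc3] at hφ
  have h1 : (Deltac^[1]) (EV2 Lψ0) 0 = 0 := cvψ1
  have h0 : (Deltac^[0]) (EV2 Lψ0) 0 = 0 := v0ψ
  have g1 : (Deltac^[1]) (EV2 Lφ0) 0 = 0 := cvφ1
  have g0 : (Deltac^[0]) (EV2 Lφ0) 0 = 0 := v0φ
  rw [h0, h1] at hψ
  rw [g0, g1] at hφ
  push_cast at hψ hφ
  have : (16 : ℂ) = 0 := by linear_combination 2 * hφ - hψ
  norm_num at this
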